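/- arXiv:2209.00524 — 8 statements merged into one kernel-verified Lean document; each statement's English description precedes it below -/
import Mathlib

section
/- For the coupled discrete potential KdV system Q1 = (u00 - u11)(v10 - v01) - α + β = 0, Q2 = (v00 - v11)(u10 - u01) - α + β = 0, the pair (ρ, σ) = (u00·v10 - u10·v00, u00·v01 - u01·v00) is a conservation law: the identity (u01·v11 - u11·v01 - u00·v10 + u10·v00) - (u10·v11 - u11·v10 - u00·v01 + u01·v00) = 0 holds whenever u11 = u00 - (α-β)/(v10 - v01) and v11 = v00 - (α-β)/(u10 - u01), assuming v10 ≠ v01 and u10 ≠ u01. -/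
/-- Conservation law of the coupled discrete potential KdV system. -/
theorem kdv_conservation_law (u00 u10 u01 u11 v00 v10 v01 v11 α β : ℝ)
    (hv : v10 ≠ v01) (hu : u10 ≠ u01)
    (hu11 : u11 = u00 - (α - β) / (v10 - v01))
    (hv11 : v11 = v00 - (α - β) / (u10 - u01)) :
    (u01 * v11 - u11 * v01 - u00 * v10 + u10 * v00) -
      (u10 * v11 - u11 * v10 - u00 * v01 + u01 * v00) = 0 := by
  have h1 : v10 - v01 ≠ 0 := sub_ne_zero.mpr hv
  have h2 : u10 - u01 ≠ 0 := sub_ne_zero.mpr hu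
  subst hu11 hv11
  field_simp
  ring
end

section
/- The vector field F = (F1, F2) with F1(n) = (u(n+1) - u(n))(v(n+1) - u(n)), F2(n) = (u(n-1) - v(n))(v(n-1) - v(n)) is a symmetry of the discrete Toda system: whenever three horizontally adjacent copies of the system u_{i,0} = v_{i+1,1} and (u_{i+1,0} - u_{i,0})(v_{i+1,0} - u_{i,0}) = (u_{i,1} - u_{i,0})(v_{i,1} - u_{i,0}) hold for i = -1, 0, 1, the two determining equations F1_{0,0} - F2_{1,1} = 0 and f00·F1_{0,0} + (v10 - u00)·F1_{1,0} + (u10 - u00)·F2_{1,0} + (u00 - v01)·F1_{0,1} + (u00 - u01)·F2_{0,1} = 0 are satisfied, where f00 = u01 + v01 - u10 - v10, F1_{i,j} = (u_{i+1,j} - u_{i,j})(v_{i+1,j} - u_{i,j}) and F2_{i,j} = (u_{i-1,j} - v_{i,j})(v_{i-1,j} - v_{i,j}). -/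
/-- The vector field `F = ((u₁₀-u₀₀)(v₁₀-u₀₀), (u₋₁₀-v₀₀)(v₋₁₀-v₀₀))` is a
symmetry of the discrete Toda system: both determining equations hold on
solutions of the three horizontally adjacent copies of the system. -/
theorem toda_symmetry_determining_equations
    (um10 u00 u10 u20 um11 u01 u11 : ℝ)
    (v00 v10 v20 vm11 v01 v11 v21 : ℝ)
    -- system at the quad with bottom-left corner (-1,0)
    (hA1 : um10 = v01)
    (hA2 : (u00 - um10) * (v00 - um10) = (um11 - um10) * (vm11 - um10))
    -- system at the quad with bottom-left corner (0,0)
    (hB1 : u00 = v11)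
    (hB2 : (u10 - u00) * (v10 - u00) = (u01 - u00) * (v01 - u00))
    -- system at the quad with bottom-left corner (1,0)
    (hC1 : u10 = v21)
    (hC2 : (u20 - u10) * (v20 - u10) = (u11 - u10) * (v11 - u10)) :
    -- first determining equation: F1_{0,0} - F2_{1,1} = 0
    (u10 - u00) * (v10 - u00) - (u01 - v11) * (v01 - v11) = 0 ∧
    -- second determining equation
    (u01 + v01 - u10 - v10) * ((u10 - u00) * (v10 - u00)) +
      (v10 - u00) * ((u20 - u10) * (v20 - u10)) +
      (u10 - u00) * ((u00 - v10) * (v00 - v10)) +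
      (u00 - v01) * ((u11 - u01) * (v11 - u01)) +
      (u00 - u01) * ((um11 - v01) * (vm11 - v01)) = 0 := by
  subst hA1 hB1 hC1
  refine ⟨by linear_combination hB2, ?_⟩
  linear_combination (u01 - u00) * hA2 + (u01 - u11 - v00 + um10) * hB2 + (v10 - u00) * hC2
end

section
/- The two symmetry flows of the discrete Toda system commute: for sequences u, v : ℤ → ℝ, with F = (F1, F2), F1(n) = (u(n) - v(n+1))/(u(n-1) - v(n+1)), F2(n) = (u(n-1) - v(n))/(u(n-1) - v(n+1)), and G = (G1, G2), G1(n) = (u(n+1) - u(n))(v(n+1) - u(n)), G2(n) = (u(n-1) - v(n))(v(n-1) - v(n)), the commutator [F, G], defined componentwise by [F,G]^{(i)} = Σ_j Σ_ℓ (S^ℓ F^{(j)})·∂G^{(i)}/∂w^{(j)}_ℓ - (S^ℓ G^{(j)})·∂F^{(i)}/∂w^{(j)}_ℓ, vanishes identically, assuming u(k) ≠ v(k+2) for all relevant shifts k so that all denominators are nonzero. -/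
namespace TodaCommute

/-- First component of the first-order rational symmetry of the discrete Toda system. -/
noncomputable def F1 (u v : ℤ → ℝ) (n : ℤ) : ℝ :=
  (u n - v (n + 1)) / (u (n - 1) - v (n + 1))

/-- Second component of the first-order rational symmetry. -/
noncomputable def F2 (u v : ℤ → ℝ) (n : ℤ) : ℝ :=
  (u (n - 1) - v n) / (u (n - 1) - v (n + 1))

/-- First component of the polynomial symmetry of the discrete Toda system. -/
def G1 (u v : ℤ → ℝ) (n : ℤ) : ℝ := (u (n + 1) - u n) * (v (n + 1) - u n)

/-- Second component of the polynomial symmetry. -/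
def G2 (u v : ℤ → ℝ) (n : ℤ) : ℝ := (u (n - 1) - v n) * (v (n - 1) - v n)

/-- The two symmetry flows of the discrete Toda system commute: both
components of the commutator `[F,G] = X_F(G) - X_G(F)`, written out with the
explicit partial derivatives of `F` and `G` with respect to the shifted
variables, vanish identically. -/
theorem toda_symmetries_commute (u v : ℤ → ℝ)
    (hne : ∀ k : ℤ, u (k - 1) ≠ v (k + 1)) : ∀ n : ℤ,
    -- first component of [F, G]
    (F1 u v n * (2 * u n - u (n + 1) - v (n + 1)) +
      F1 u v (n + 1) * (v (n + 1) - u n) +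
      F2 u v (n + 1) * (u (n + 1) - u n)) -
    (G1 u v n * (1 / (u (n - 1) - v (n + 1))) +
      G1 u v (n - 1) * (-(u n - v (n + 1)) / (u (n - 1) - v (n + 1)) ^ 2) +
      G2 u v (n + 1) * ((u n - u (n - 1)) / (u (n - 1) - v (n + 1)) ^ 2)) = 0 ∧
    -- second component of [F, G]
    (F1 u v (n - 1) * (v (n - 1) - v n) +
      F2 u v (n - 1) * (u (n - 1) - v n) +
      F2 u v n * (2 * v n - v (n - 1) - u (n - 1))) -
    (G1 u v (n - 1) * ((v n - v (n + 1)) / (u (n - 1) - v (n + 1)) ^ 2) +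
      G2 u v n * (-(1 / (u (n - 1) - v (n + 1)))) +
      G2 u v (n + 1) * ((u (n - 1) - v n) / (u (n - 1) - v (n + 1)) ^ 2)) = 0 := by
  intro n
  have h0 : u (n - 1) - v (n + 1) ≠ 0 := sub_ne_zero.mpr (hne n)
  have h1 : u (n + 1 - 1) - v (n + 1 + 1) ≠ 0 := sub_ne_zero.mpr (hne (n + 1))
  have h2 : u (n - 1 - 1) - v (n - 1 + 1) ≠ 0 := sub_ne_zero.mpr (hne (n - 1))
  have e1 : n + 1 - 1 = n := by ring
  have e2 : n - 1 + 1 = n := by ring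
  rw [e1] at h1
  rw [e2] at h2
  constructor <;>
  · simp only [F1, F2, G1, G2, e1, e2]
    field_simp
    ring

end TodaCommute
end

section
/- For the coupled discrete potential KdV system, F = (F1, F2) with F1 = 1/(v(n+1) - v(n-1)), F2 = 1/(u(n+1) - u(n-1)) is a symmetry: whenever three horizontally adjacent copies of the system (u_{i,0} - u_{i,1})(v_{i+1,0} - v_{i,1}) = α - β and (v_{i,0} - v_{i,1})(u_{i+1,0} - u_{i,1}) = α - β hold for i = -1, 0, 1 (indices shifted appropriately so that the quad at positions (0,0) and the quads at (-1,0), (1,0) hold), the determining equations Q_{(0,0)}F_{0,0} + Q_{(1,0)}F_{1,0} + Q_{(0,1)}F_{0,1} + Q_{(1,1)}F_{1,1} = 0 are satisfied, where F_{i,j} = (1/(v_{i+1,j} - v_{i-1,j}), 1/(u_{i+1,j} - u_{i-1,j})), assuming all denominators are nonzero. -/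
/-- `F = (1/(v₁₀-v₋₁₀), 1/(u₁₀-u₋₁₀))` is a symmetry of the coupled discrete
potential KdV system: the determining equations
`Q_{(0,0)}F_{0,0} + Q_{(1,0)}F_{1,0} + Q_{(0,1)}F_{0,1} + Q_{(1,1)}F_{1,1} = 0`
hold on solutions of the three adjacent copies of the system. -/
theorem kdv_symmetry_determining_equations
    (um10 u00 u10 u20 um11 u01 u11 u21 : ℝ)
    (vm10 v00 v10 v20 vm11 v01 v11 v21 : ℝ) (α β : ℝ)
    -- system at the quad with bottom-left corner (-1,0)
    (hA1 : (um10 - u01) * (v00 - vm11) = α - β)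
    (hA2 : (vm10 - v01) * (u00 - um11) = α - β)
    -- system at the quad with bottom-left corner (0,0)
    (hB1 : (u00 - u11) * (v10 - v01) = α - β)
    (hB2 : (v00 - v11) * (u10 - u01) = α - β)
    -- system at the quad with bottom-left corner (1,0)
    (hC1 : (u10 - u21) * (v20 - v11) = α - β)
    (hC2 : (v10 - v21) * (u20 - u11) = α - β)
    -- nondegeneracy of all denominators
    (h1 : v10 ≠ vm10) (h2 : u10 ≠ um10) (h3 : v20 ≠ v00) (h4 : u20 ≠ u00)
    (h5 : v11 ≠ vm11) (h6 : u11 ≠ um11) (h7 : v21 ≠ v01) (h8 : u21 ≠ u01) :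
    -- first component of the determining equations
    (v10 - v01) * (1 / (v10 - vm10)) + (u00 - u11) * (1 / (u20 - u00)) -
      (u00 - u11) * (1 / (u11 - um11)) - (v10 - v01) * (1 / (v21 - v01)) = 0 ∧
    -- second component of the determining equations
    (u10 - u01) * (1 / (u10 - um10)) + (v00 - v11) * (1 / (v20 - v00)) -
      (v00 - v11) * (1 / (v11 - vm11)) - (u10 - u01) * (1 / (u21 - u01)) = 0 := by
  constructor
  · -- first component
    by_cases hd : α - β = 0
    · have h0 : (u00 - u11) * (v10 - v01) = 0 := hB1.trans hd
      rcases mul_eq_zero.mp h0 with hu | hv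
      · have hm : u00 - um11 ≠ 0 := fun h => h6 (by linarith)
        have ha : vm10 - v01 = 0 := by
          rcases mul_eq_zero.mp (hA2.trans hd) with h | h
          · exact h
          · exact absurd h hm
        have hn : u20 - u11 ≠ 0 := fun h => h4 (by linarith)
        have hc : v10 - v21 = 0 := by
          rcases mul_eq_zero.mp (hC2.trans hd) with h | h
          · exact h
          · exact absurd h hn
        have e1 : vm10 = v01 := by linarith
        have e2 : v21 = v10 := by linarith
        have e3 : u11 = u00 := by linarith
        subst e1 e2 e3
        ring
      · have hm : vm10 - v01 ≠ 0 := fun h => h1 (by linarith)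
        have ha : u00 - um11 = 0 := by
          rcases mul_eq_zero.mp (hA2.trans hd) with h | h
          · exact absurd h hm
          · exact h
        have hn : v10 - v21 ≠ 0 := fun h => h7 (by linarith)
        have hc : u20 - u11 = 0 := by
          rcases mul_eq_zero.mp (hC2.trans hd) with h | h
          · exact absurd h hn
          · exact h
        have e1 : v01 = v10 := by linarith
        have e2 : um11 = u00 := by linarith
        have e3 : u20 = u11 := by linarith
        subst e1 e2 e3
        ring
    · have hu : u00 - u11 ≠ 0 := by
        intro h; exact hd (by rw [← hB1, h, zero_mul])
      have E1 : (v10 - v01) * (u11 - um11) = (u00 - um11) * (v10 - vm10) :=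
        mul_left_cancel₀ hu (by linear_combination (u11 - u00) * hB1 + (u00 - u11) * hA2)
      have E2 : (v10 - v01) * (u20 - u00) = (u20 - u11) * (v21 - v01) :=
        mul_left_cancel₀ hu (by linear_combination (u11 - u00) * hB1 + (u00 - u11) * hC2)
      have hv1 : v10 - vm10 ≠ 0 := sub_ne_zero_of_ne h1
      have hv2 : u11 - um11 ≠ 0 := sub_ne_zero_of_ne h6
      have hv3 : v21 - v01 ≠ 0 := sub_ne_zero_of_ne h7
      have hv4 : u20 - u00 ≠ 0 := sub_ne_zero_of_ne h4
      have e1 : (v10 - v01) * (1 / (v10 - vm10)) = (u00 - um11) * (1 / (u11 - um11)) := by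
        rw [mul_one_div, mul_one_div, div_eq_div_iff hv1 hv2]
        linear_combination E1
      have e2 : (v10 - v01) * (1 / (v21 - v01)) = (u20 - u11) * (1 / (u20 - u00)) := by
        rw [mul_one_div, mul_one_div, div_eq_div_iff hv3 hv4]
        linear_combination E2
      rw [e1, e2]
      field_simp
      ring
  · -- second component
    by_cases hd : α - β = 0
    · have h0 : (v00 - v11) * (u10 - u01) = 0 := hB2.trans hd
      rcases mul_eq_zero.mp h0 with hv | hu
      · have hm : v00 - vm11 ≠ 0 := fun h => h5 (by linarith)
        have ha : um10 - u01 = 0 := by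
          rcases mul_eq_zero.mp (hA1.trans hd) with h | h
          · exact h
          · exact absurd h hm
        have hn : v20 - v11 ≠ 0 := fun h => h3 (by linarith)
        have hc : u10 - u21 = 0 := by
          rcases mul_eq_zero.mp (hC1.trans hd) with h | h
          · exact h
          · exact absurd h hn
        have e1 : um10 = u01 := by linarith
        have e2 : u21 = u10 := by linarith
        have e3 : v11 = v00 := by linarith
        subst e1 e2 e3
        ring
      · have hm : um10 - u01 ≠ 0 := fun h => h2 (by linarith)
        have ha : v00 - vm11 = 0 := by
          rcases mul_eq_zero.mp (hA1.trans hd) with h | h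
          · exact absurd h hm
          · exact h
        have hn : u10 - u21 ≠ 0 := fun h => h8 (by linarith)
        have hc : v20 - v11 = 0 := by
          rcases mul_eq_zero.mp (hC1.trans hd) with h | h
          · exact absurd h hn
          · exact h
        have e1 : u01 = u10 := by linarith
        have e2 : vm11 = v00 := by linarith
        have e3 : v20 = v11 := by linarith
        subst e1 e2 e3
        ring
    · have hv : v00 - v11 ≠ 0 := by
        intro h; exact hd (by rw [← hB2, h, zero_mul])
      have E1 : (u10 - u01) * (v11 - vm11) = (v00 - vm11) * (u10 - um10) :=
        mul_left_cancel₀ hv (by linear_combination (v11 - v00) * hB2 + (v00 - v11) * hA1)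
      have E2 : (u10 - u01) * (v20 - v00) = (v20 - v11) * (u21 - u01) :=
        mul_left_cancel₀ hv (by linear_combination (v11 - v00) * hB2 + (v00 - v11) * hC1)
      have hv1 : u10 - um10 ≠ 0 := sub_ne_zero_of_ne h2
      have hv2 : v11 - vm11 ≠ 0 := sub_ne_zero_of_ne h5
      have hv3 : u21 - u01 ≠ 0 := sub_ne_zero_of_ne h8
      have hv4 : v20 - v00 ≠ 0 := sub_ne_zero_of_ne h3
      have e1 : (u10 - u01) * (1 / (u10 - um10)) = (v00 - vm11) * (1 / (v11 - vm11)) := by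
        rw [mul_one_div, mul_one_div, div_eq_div_iff hv1 hv2]
        linear_combination E1
      have e2 : (u10 - u01) * (1 / (u21 - u01)) = (v20 - v11) * (1 / (v20 - v00)) := by
        rw [mul_one_div, mul_one_div, div_eq_div_iff hv3 hv4]
        linear_combination E2
      rw [e1, e2]
      field_simp
      ring
end

section
/- The pair (ρ, σ) = (ln((u_{1,0}-u_{-1,0})(v_{1,0}-v_{-1,0})), ln((u_{0,1}-u_{-1,0})(v_{0,1}-v_{-1,0}))) is a conservation law of the coupled discrete potential KdV system: on solutions of the system at the two quads with bottom-left corners (-1,0) and (0,0), one has (u_{1,1}-u_{-1,1})(v_{1,1}-v_{-1,1})·(u_{0,1}-u_{-1,0})(v_{0,1}-v_{-1,0}) = (u_{1,0}-u_{-1,0})(v_{1,0}-v_{-1,0})·(u_{1,1}-u_{0,0})(v_{1,1}-v_{0,0}), all factors being assumed nonzero. -/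
/-- Multiplicative form of the conservation law
`(ρ,σ) = (ln((u₁₀-u₋₁₀)(v₁₀-v₋₁₀)), ln((u₀₁-u₋₁₀)(v₀₁-v₋₁₀)))` of the coupled
discrete potential KdV system. -/
theorem kdv_log_conservation_law
    (um10 u00 u10 um11 u01 u11 : ℝ)
    (vm10 v00 v10 vm11 v01 v11 : ℝ) (α β : ℝ)
    -- system at the quad with bottom-left corner (-1,0)
    (hA1 : (um10 - u01) * (v00 - vm11) = α - β)
    (hA2 : (vm10 - v01) * (u00 - um11) = α - β)
    -- system at the quad with bottom-left corner (0,0)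
    (hB1 : (u00 - u11) * (v10 - v01) = α - β)
    (hB2 : (v00 - v11) * (u10 - u01) = α - β)
    -- all factors nonzero
    (h1 : u10 - um10 ≠ 0) (h2 : v10 - vm10 ≠ 0)
    (h3 : u01 - um10 ≠ 0) (h4 : v01 - vm10 ≠ 0)
    (h5 : u11 - um11 ≠ 0) (h6 : v11 - vm11 ≠ 0)
    (h7 : u11 - u00 ≠ 0) (h8 : v11 - v00 ≠ 0) :
    (u11 - um11) * (v11 - vm11) * ((u01 - um10) * (v01 - vm10)) =
      (u10 - um10) * (v10 - vm10) * ((u11 - u00) * (v11 - v00)) := by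
  by_cases ht : α - β = 0
  · -- degenerate case
    have hq1 : v10 - v01 = 0 := by
      rcases mul_eq_zero.mp (hB1.trans ht) with h | h
      · exact absurd (by linarith) h7
      · exact h
    have hq3 : u10 - u01 = 0 := by
      rcases mul_eq_zero.mp (hB2.trans ht) with h | h
      · exact absurd (by linarith) h8
      · exact h
    have hA1' : v00 - vm11 = 0 := by
      rcases mul_eq_zero.mp (hA1.trans ht) with h | h
      · exact absurd (by linarith [hq3]) h3
      · exact h
    have hA2' : u00 - um11 = 0 := by
      rcases mul_eq_zero.mp (hA2.trans ht) with h | h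
      · exact absurd (by linarith [hq1]) h4
      · exact h
    have e1 : u01 = u10 := by linarith
    have e2 : v01 = v10 := by linarith
    have e3 : vm11 = v00 := by linarith
    have e4 : um11 = u00 := by linarith
    subst e1 e2 e3 e4
    ring
  · -- generic case
    have hq1 : v10 - v01 ≠ 0 := by
      intro h; apply ht; rw [← hB1, h, mul_zero]
    have hq3 : u10 - u01 ≠ 0 := by
      intro h; apply ht; rw [← hB2, h, mul_zero]
    have hq2 : vm10 - v01 ≠ 0 := by
      intro h; apply ht; rw [← hA2, h, zero_mul]
    have hq4 : um10 - u01 ≠ 0 := by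
      intro h; apply ht; rw [← hA1, h, zero_mul]
    have e1 : (u11 - um11) * ((v10 - v01) * (vm10 - v01))
        = (α - β) * (v10 - vm10) := by
      linear_combination (v10 - v01) * hA2 - (vm10 - v01) * hB1
    have e2 : (v11 - vm11) * ((u10 - u01) * (um10 - u01))
        = (α - β) * (u10 - um10) := by
      linear_combination (u10 - u01) * hA1 - (um10 - u01) * hB2
    have hC : (u11 - u00) * (v10 - v01) = -(α - β) := by linear_combination -hB1
    have hD : (v11 - v00) * (u10 - u01) = -(α - β) := by linear_combination -hB2
    have hM : (v10 - v01) * (vm10 - v01) * ((u10 - u01) * (um10 - u01)) ≠ 0 :=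
      mul_ne_zero (mul_ne_zero hq1 hq2) (mul_ne_zero hq3 hq4)
    apply mul_right_cancel₀ hM
    calc (u11 - um11) * (v11 - vm11) * ((u01 - um10) * (v01 - vm10)) *
          ((v10 - v01) * (vm10 - v01) * ((u10 - u01) * (um10 - u01)))
        = ((u11 - um11) * ((v10 - v01) * (vm10 - v01))) *
          ((v11 - vm11) * ((u10 - u01) * (um10 - u01))) *
          ((u01 - um10) * (v01 - vm10)) := by ring
      _ = ((α - β) * (v10 - vm10)) * ((α - β) * (u10 - um10)) *
          ((u01 - um10) * (v01 - vm10)) := by rw [e1, e2]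
      _ = (u10 - um10) * (v10 - vm10) * ((-(α - β)) * (-(α - β))) *
          ((vm10 - v01) * (um10 - u01)) := by ring
      _ = (u10 - um10) * (v10 - vm10) *
          (((u11 - u00) * (v10 - v01)) * ((v11 - v00) * (u10 - u01))) *
          ((vm10 - v01) * (um10 - u01)) := by rw [hC, hD]
      _ = (u10 - um10) * (v10 - vm10) * ((u11 - u00) * (v11 - v00)) *
          ((v10 - v01) * (vm10 - v01) * ((u10 - u01) * (um10 - u01))) := by ring
end

section
/- The discrete NLS symmetry F = (u_{-1,0}/(1 + u_{-1,0}v_{1,0}), -v_{1,0}/(1 + u_{-1,0}v_{1,0})) satisfies the determining equations: on solutions of the discrete NLS system at the quads with bottom-left corners (-1,0), (0,0), (1,0), one has Q_{(0,0)}·F_{0,0} + F_{1,0} - F_{0,1} + Q_{(1,1)}·F_{1,1} = 0, where F_{i,j} = (u_{i-1,j}/(1 + u_{i-1,j}v_{i+1,j}), -v_{i+1,j}/(1 + u_{i-1,j}v_{i+1,j})), Q_{(0,0)} = f_{0,0}·[[1, 0],[v_{1,1}², 0]], Q_{(1,1)} = f_{0,0}·[[0, -u_{0,0}²],[0, -1]],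 and f_{0,0} = (β-α)/(1 + u_{0,0}v_{1,1})². -/
/-!
Write `γ = α - β` and `K = (1 + u₀₀v₁₁)(1 + u₁₀v₂₁) - γ u₀₀v₂₁` (`DNLS.pairFactor`). On the quad
with corner `(0,0)` the `u`-equation gives `1 + u₀₁v₂₁ = K / (1 + u₀₀v₁₁)`, and on the quad with
corner `(1,0)` the `v`-equation gives `1 + u₀₀v₂₀ = K / (1 + u₁₀v₂₁)`: the same `K` appears twice.
Substituting, `F_{1,0} + Q_{(1,1)}F_{1,1}` collapses to `(u₀₀, -v₁₁) / (1 + u₀₀v₁₁)`. The same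
computation one step to the left, on the quads with corners `(-1,0)` and `(0,0)`, collapses
`Q_{(0,0)}F_{0,0} - F_{0,1}` to `(-u₀₀, v₁₁) / (1 + u₀₀v₁₁)`, and the two cancel. The lemmas below
are indexed from the corners `(0,0)` and `(1,0)`; the `left_column` ones are applied shifted by one.
-/

namespace DNLS

def pairFactor (γ u00 u10 v11 v21 : ℝ) : ℝ :=
  (1 + u00 * v11) * (1 + u10 * v21) - γ * u00 * v21

variable {α β u00 u10 u01 v11 v20 v21 : ℝ}

theorem mul_eq_of_u_eq (hu : u10 - u01 = ((α - β) / (1 + u00 * v11)) * u00)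
    (hp : 1 + u00 * v11 ≠ 0) :
    u01 * (1 + u00 * v11) = u10 * (1 + u00 * v11) - (α - β) * u00 := by
  field_simp at hu
  linear_combination -hu

theorem mul_eq_of_v_eq (hv : v20 - v11 = -(((α - β) / (1 + u10 * v21)) * v21))
    (hr : 1 + u10 * v21 ≠ 0) :
    v20 * (1 + u10 * v21) = v11 * (1 + u10 * v21) - (α - β) * v21 := by
  field_simp at hv
  linear_combination hv

theorem one_add_mul_eq_of_u_eq (w : ℝ)
    (hu : u10 - u01 = ((α - β) / (1 + u00 * v11)) * u00) (hp : 1 + u00 * v11 ≠ 0) :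
    1 + u01 * w = pairFactor (α - β) u00 u10 v11 w / (1 + u00 * v11) := by
  rw [eq_div_iff hp, pairFactor]
  linear_combination w * mul_eq_of_u_eq hu hp

theorem one_add_mul_eq_of_v_eq (x : ℝ)
    (hv : v20 - v11 = -(((α - β) / (1 + u10 * v21)) * v21)) (hr : 1 + u10 * v21 ≠ 0) :
    1 + x * v20 = pairFactor (α - β) x u10 v11 v21 / (1 + u10 * v21) := by
  rw [eq_div_iff hr, pairFactor]
  linear_combination x * mul_eq_of_v_eq hv hr

theorem pairFactor_ne_zero (hv : v20 - v11 = -(((α - β) / (1 + u10 * v21)) * v21))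
    (hr : 1 + u10 * v21 ≠ 0) (hD : 1 + u00 * v20 ≠ 0) :
    pairFactor (α - β) u00 u10 v11 v21 ≠ 0 := by
  rw [one_add_mul_eq_of_v_eq u00 hv hr] at hD
  exact (div_ne_zero_iff.1 hD).1

theorem fst_left_column
    (hu : u10 - u01 = ((α - β) / (1 + u00 * v11)) * u00)
    (hv : v20 - v11 = -(((α - β) / (1 + u10 * v21)) * v21))
    (hp : 1 + u00 * v11 ≠ 0) (hr : 1 + u10 * v21 ≠ 0) (hD : 1 + u00 * v20 ≠ 0) :
    ((β - α) / (1 + u10 * v21) ^ 2) * (u00 / (1 + u00 * v20)) - u01 / (1 + u01 * v21) =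
      -(u10 / (1 + u10 * v21)) := by
  have hK := pairFactor_ne_zero hv hr hD
  rw [one_add_mul_eq_of_u_eq v21 hu hp, one_add_mul_eq_of_v_eq u00 hv hr]
  field_simp
  rw [pairFactor]
  linear_combination (-(1 + u10 * v21)) * mul_eq_of_u_eq hu hp

theorem snd_left_column
    (hu : u10 - u01 = ((α - β) / (1 + u00 * v11)) * u00)
    (hv : v20 - v11 = -(((α - β) / (1 + u10 * v21)) * v21))
    (hp : 1 + u00 * v11 ≠ 0) (hr : 1 + u10 * v21 ≠ 0) (hD : 1 + u00 * v20 ≠ 0) :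
    ((β - α) / (1 + u10 * v21) ^ 2) * v21 ^ 2 * (u00 / (1 + u00 * v20)) + v21 / (1 + u01 * v21) =
      v21 / (1 + u10 * v21) := by
  have hK := pairFactor_ne_zero hv hr hD
  rw [one_add_mul_eq_of_u_eq v21 hu hp, one_add_mul_eq_of_v_eq u00 hv hr]
  field_simp
  rw [pairFactor]
  ring

theorem fst_right_column
    (hu : u10 - u01 = ((α - β) / (1 + u00 * v11)) * u00)
    (hv : v20 - v11 = -(((α - β) / (1 + u10 * v21)) * v21))
    (hp : 1 + u00 * v11 ≠ 0) (hr : 1 + u10 * v21 ≠ 0) (hD : 1 + u00 * v20 ≠ 0) :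
    u00 / (1 + u00 * v20) - ((β - α) / (1 + u00 * v11) ^ 2) * u00 ^ 2 * (-(v21 / (1 + u01 * v21))) =
      u00 / (1 + u00 * v11) := by
  have hK := pairFactor_ne_zero hv hr hD
  rw [one_add_mul_eq_of_u_eq v21 hu hp, one_add_mul_eq_of_v_eq u00 hv hr]
  field_simp
  rw [pairFactor]
  ring

theorem snd_right_column
    (hu : u10 - u01 = ((α - β) / (1 + u00 * v11)) * u00)
    (hv : v20 - v11 = -(((α - β) / (1 + u10 * v21)) * v21))
    (hp : 1 + u00 * v11 ≠ 0) (hr : 1 + u10 * v21 ≠ 0) (hD : 1 + u00 * v20 ≠ 0) :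
    -(v20 / (1 + u00 * v20)) - ((β - α) / (1 + u00 * v11) ^ 2) * (-(v21 / (1 + u01 * v21))) =
      -(v11 / (1 + u00 * v11)) := by
  have hK := pairFactor_ne_zero hv hr hD
  rw [one_add_mul_eq_of_u_eq v21 hu hp, one_add_mul_eq_of_v_eq u00 hv hr]
  field_simp
  rw [pairFactor]
  linear_combination (-(1 + u00 * v11)) * mul_eq_of_v_eq hv hr

end DNLS

theorem nls_symmetry_determining_equations_general
    (um10 u00 u10 um11 u01 : ℝ)
    (v10 v20 v01 v11 v21 : ℝ) (α β : ℝ)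
    -- system at the quad with bottom-left corner (-1,0)
    (hA1 : u00 - um11 = ((α - β) / (1 + um10 * v01)) * um10)
    -- system at the quad with bottom-left corner (0,0)
    (hB1 : u10 - u01 = ((α - β) / (1 + u00 * v11)) * u00)
    (hB2 : v10 - v01 = -(((α - β) / (1 + u00 * v11)) * v11))
    -- system at the quad with bottom-left corner (1,0)
    (hC2 : v20 - v11 = -(((α - β) / (1 + u10 * v21)) * v21))
    -- nondegeneracy
    (h1 : 1 + um10 * v01 ≠ 0) (h2 : 1 + u00 * v11 ≠ 0) (h3 : 1 + u10 * v21 ≠ 0)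
    (h4 : 1 + um10 * v10 ≠ 0) (h5 : 1 + u00 * v20 ≠ 0) :
    -- first component of the determining equations
    ((β - α) / (1 + u00 * v11) ^ 2) * (um10 / (1 + um10 * v10)) +
      u00 / (1 + u00 * v20) - um11 / (1 + um11 * v11) -
      ((β - α) / (1 + u00 * v11) ^ 2) * u00 ^ 2 * (-(v21 / (1 + u01 * v21))) = 0 ∧
    -- second component of the determining equations
    ((β - α) / (1 + u00 * v11) ^ 2) * v11 ^ 2 * (um10 / (1 + um10 * v10)) +
      (-(v20 / (1 + u00 * v20))) - (-(v11 / (1 + um11 * v11))) -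
      ((β - α) / (1 + u00 * v11) ^ 2) * (-(v21 / (1 + u01 * v21))) = 0 := by
  have left₁ := DNLS.fst_left_column hA1 hB2 h1 h2 h4
  have right₁ := DNLS.fst_right_column hB1 hC2 h2 h3 h5
  have left₂ := DNLS.snd_left_column hA1 hB2 h1 h2 h4
  have right₂ := DNLS.snd_right_column hB1 hC2 h2 h3 h5
  exact ⟨by linear_combination left₁ + right₁, by linear_combination left₂ + right₂⟩

/-- The discrete NLS symmetry
`F = (u₋₁₀/(1+u₋₁₀v₁₀), -v₁₀/(1+u₋₁₀v₁₀))` satisfies the determining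
equations `Q_{(0,0)}F_{0,0} + F_{1,0} - F_{0,1} + Q_{(1,1)}F_{1,1} = 0` on
solutions of the discrete NLS system. -/
theorem nls_symmetry_determining_equations
    (um10 u00 u10 u20 um11 u01 u11 : ℝ)
    (v00 v10 v20 vm11 v01 v11 v21 : ℝ) (α β : ℝ)
    -- system at the quad with bottom-left corner (-1,0)
    (hA1 : u00 - um11 = ((α - β) / (1 + um10 * v01)) * um10)
    (hA2 : v00 - vm11 = -(((α - β) / (1 + um10 * v01)) * v01))
    -- system at the quad with bottom-left corner (0,0)
    (hB1 : u10 - u01 = ((α - β) / (1 + u00 * v11)) * u00)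
    (hB2 : v10 - v01 = -(((α - β) / (1 + u00 * v11)) * v11))
    -- system at the quad with bottom-left corner (1,0)
    (hC1 : u20 - u11 = ((α - β) / (1 + u10 * v21)) * u10)
    (hC2 : v20 - v11 = -(((α - β) / (1 + u10 * v21)) * v21))
    -- nondegeneracy
    (h1 : 1 + um10 * v01 ≠ 0) (h2 : 1 + u00 * v11 ≠ 0) (h3 : 1 + u10 * v21 ≠ 0)
    (h4 : 1 + um10 * v10 ≠ 0) (h5 : 1 + u00 * v20 ≠ 0)
    (h6 : 1 + um11 * v11 ≠ 0) (h7 : 1 + u01 * v21 ≠ 0) :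
    -- first component of the determining equations
    ((β - α) / (1 + u00 * v11) ^ 2) * (um10 / (1 + um10 * v10)) +
      u00 / (1 + u00 * v20) - um11 / (1 + um11 * v11) -
      ((β - α) / (1 + u00 * v11) ^ 2) * u00 ^ 2 * (-(v21 / (1 + u01 * v21))) = 0 ∧
    -- second component of the determining equations
    ((β - α) / (1 + u00 * v11) ^ 2) * v11 ^ 2 * (um10 / (1 + um10 * v10)) +
      (-(v20 / (1 + u00 * v20))) - (-(v11 / (1 + um11 * v11))) -
      ((β - α) / (1 + u00 * v11) ^ 2) * (-(v21 / (1 + u01 * v21))) = 0 :=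
  nls_symmetry_determining_equations_general um10 u00 u10 um11 u01 v10 v20 v01 v11 v21 α β hA1 hB1
    hB2 hC2 h1 h2 h3 h4 h5
end

section
/- The symmetry G = (G1, G2), G1(n) = (u(n+1)-u(n))(v(n+1)-u(n)), G2(n) = (u(n-1)-v(n))(v(n-1)-v(n)) of the discrete Toda system commutes with the second-order symmetry H = (H1, H2), H1(n) = (u(n)-v(n+1))·(u(n+2)v(n+2) - (u(n+2)+v(n+2)-v(n))u(n+1) + (u(n+1)-v(n))u(n)), H2(n) = (u(n-1)-v(n))·(u(n-2)v(n-2) - (u(n-2)+v(n-2)-u(n))v(n-1) + (v(n-1)-u(n))v(n)) under the symmetry bracket, i.e., [G, H] = 0 identically as polynomial identities in the shifted variables. -/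
set_option maxHeartbeats 1000000


namespace TodaHigherCommute

/-- First component of the first-order polynomial symmetry `G` of the discrete
Toda system. -/
def G1 (u v : ℤ → ℝ) (n : ℤ) : ℝ := (u (n + 1) - u n) * (v (n + 1) - u n)

/-- Second component of `G`. -/
def G2 (u v : ℤ → ℝ) (n : ℤ) : ℝ := (u (n - 1) - v n) * (v (n - 1) - v n)

/-- First component of the second-order polynomial symmetry `H`. -/
def H1 (u v : ℤ → ℝ) (n : ℤ) : ℝ :=
  (u n - v (n + 1)) *
    (u (n + 2) * v (n + 2) - (u (n + 2) + v (n + 2) - v n) * u (n + 1) +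
      (u (n + 1) - v n) * u n)

/-- Second component of `H`. -/
def H2 (u v : ℤ → ℝ) (n : ℤ) : ℝ :=
  (u (n - 1) - v n) *
    (u (n - 2) * v (n - 2) - (u (n - 2) + v (n - 2) - u n) * v (n - 1) +
      (v (n - 1) - u n) * v n)

/-- The first-order symmetry `G` and the second-order symmetry `H` of the
discrete Toda system commute: both components of the commutator
`[G,H] = X_G(H) - X_H(G)`, written out with the explicit partial derivatives
with respect to the shifted variables, vanish identically. -/
theorem toda_higher_symmetries_commute (u v : ℤ → ℝ) : ∀ n : ℤ,
    -- first component of [G, H]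
    (G1 u v n * ((u (n + 2) * v (n + 2) - (u (n + 2) + v (n + 2) - v n) * u (n + 1) +
        (u (n + 1) - v n) * u n) + (u n - v (n + 1)) * (u (n + 1) - v n)) +
      G1 u v (n + 1) * ((u n - v (n + 1)) * (u n - u (n + 2) - v (n + 2) + v n)) +
      G1 u v (n + 2) * ((u n - v (n + 1)) * (v (n + 2) - u (n + 1))) +
      G2 u v n * ((u n - v (n + 1)) * (u (n + 1) - u n)) +
      G2 u v (n + 1) * (-(u (n + 2) * v (n + 2) - (u (n + 2) + v (n + 2) - v n) * u (n + 1) +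
        (u (n + 1) - v n) * u n)) +
      G2 u v (n + 2) * ((u n - v (n + 1)) * (u (n + 2) - u (n + 1)))) -
    (H1 u v n * (2 * u n - u (n + 1) - v (n + 1)) +
      H1 u v (n + 1) * (v (n + 1) - u n) +
      H2 u v (n + 1) * (u (n + 1) - u n)) = 0 ∧
    -- second component of [G, H]
    (G1 u v (n - 2) * ((u (n - 1) - v n) * (v (n - 2) - v (n - 1))) +
      G1 u v (n - 1) * (u (n - 2) * v (n - 2) - (u (n - 2) + v (n - 2) - u n) * v (n - 1) +
        (v (n - 1) - u n) * v n) +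
      G1 u v n * ((u (n - 1) - v n) * (v (n - 1) - v n)) +
      G2 u v (n - 2) * ((u (n - 1) - v n) * (u (n - 2) - v (n - 1))) +
      G2 u v (n - 1) * ((u (n - 1) - v n) * (v n - u (n - 2) - v (n - 2) + u n)) +
      G2 u v n * (-(u (n - 2) * v (n - 2) - (u (n - 2) + v (n - 2) - u n) * v (n - 1) +
        (v (n - 1) - u n) * v n) + (u (n - 1) - v n) * (v (n - 1) - u n))) -
    (H1 u v (n - 1) * (v (n - 1) - v n) +
      H2 u v (n - 1) * (u (n - 1) - v n) +
      H2 u v n * (2 * v n - v (n - 1) - u (n - 1))) = 0 := by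
  intro n
  constructor <;> (simp only [G1, G2, H1, H2]; ring_nf)

end TodaHigherCommute
end

section
/- The pair (ρ, σ) = (ln((v(0,0)-u(-1,0))/(v(1,0)-u(-1,0))²), ln((u(-2,0)-v(0,0))²/(u(-2,0)-u(-1,0)))) is a conservation law of the discrete Toda system, stated multiplicatively: on solutions of the system at the relevant quads, (v(0,1)-u(-1,1))/(v(1,1)-u(-1,1))² · (v(1,0)-u(-1,0))²/(v(0,0)-u(-1,0)) = (u(-1,0)-v(1,0))²/(u(-1,0)-u(0,0)) · (u(-2,0)-u(-1,0))/(u(-2,0)-v(0,0))², with all factors nonzero. -/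
/-- Multiplicative form of the conservation law
`(ρ,σ) = (ln((v₀₀-u₋₁₀)/(v₁₀-u₋₁₀)²), ln((u₋₂₀-v₀₀)²/(u₋₂₀-u₋₁₀)))` of the
discrete Toda system. -/
theorem toda_log_conservation_law
    (um20 um10 u00 u10 um21 um11 u01 : ℝ)
    (vm20 vm10 v00 v10 vm21 vm11 v01 v11 : ℝ)
    -- system at the quad with bottom-left corner (-2,0)
    (hA1 : um20 = vm11)
    (hA2 : (um10 - um20) * (vm10 - um20) = (um21 - um20) * (vm21 - um20))
    -- system at the quad with bottom-left corner (-1,0)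
    (hB1 : um10 = v01)
    (hB2 : (u00 - um10) * (v00 - um10) = (um11 - um10) * (vm11 - um10))
    -- system at the quad with bottom-left corner (0,0)
    (hC1 : u00 = v11)
    (hC2 : (u10 - u00) * (v10 - u00) = (u01 - u00) * (v01 - u00))
    -- all factors nonzero
    (h1 : v01 - um11 ≠ 0) (h2 : v11 - um11 ≠ 0) (h3 : v10 - um10 ≠ 0)
    (h4 : v00 - um10 ≠ 0) (h5 : um10 - v10 ≠ 0) (h6 : um10 - u00 ≠ 0)
    (h7 : um20 - um10 ≠ 0) (h8 : um20 - v00 ≠ 0) :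
    (v01 - um11) / (v11 - um11) ^ 2 * ((v10 - um10) ^ 2 / (v00 - um10)) =
      (um10 - v10) ^ 2 / (um10 - u00) * ((um20 - um10) / (um20 - v00) ^ 2) := by
  subst hA1 hB1 hC1
  field_simp
  ring_nf
  linear_combination (v10-um10)^2*((um11-um10)*(v00-um10)-(u00-um10)*(um20-um10))*hB2
end
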